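/- arXiv:2105.09604 — 2 statements merged into one kernel-verified Lean document; each statement's English description precedes it below -/
import Mathlib

section
/- For equivalence relations R, S on ℕ, R is computably reducible to S (there is a computable f with x R y ↔ f(x) S f(y) for all x, y) if and only if there exists a monomorphism from R to S in the category Eq. -/
/-- `f` is `(R,S)`-equivalence preserving. -/
def EqvPres (R S : Setoid ℕ) (f : ℕ → ℕ) : Prop :=
  ∀ x y, R.r x y → S.r (f x) (f y)

/-- `α` is a morphism of the category `Eq` from `R` to `S`: a map on quotients
induced by a computable equivalence-preserving function. -/
def IsMor (R S : Setoid ℕ) (α : Quotient R → Quotient S) : Prop :=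
  ∃ f : ℕ → ℕ, Computable f ∧ EqvPres R S f ∧
    ∀ x, α (Quotient.mk R x) = Quotient.mk S (f x)

/-- `γ` is a monomorphism in `Eq`. -/
def IsMono (R S : Setoid ℕ) (γ : Quotient R → Quotient S) : Prop :=
  ∀ (E : Setoid ℕ) (α β : Quotient E → Quotient R),
    IsMor E R α → IsMor E R β → γ ∘ α = γ ∘ β → α = β

/-!
A morphism of `Eq` is a monomorphism exactly when it is injective on classes: injective maps
are left-cancellable, and conversely constant maps are morphisms, so a monomorphism separates
any two classes. Injectivity of the map induced by `f` on classes says precisely that `f`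
reflects the equivalence, which together with preservation is a computable reduction.
-/

theorem injective_iff_reflects {α β : Type*} {R : Setoid α} {S : Setoid β}
    {μ : Quotient R → Quotient S} {f : α → β}
    (hμ : ∀ x, μ (Quotient.mk R x) = Quotient.mk S (f x)) :
    Function.Injective μ ↔ ∀ x y, S.r (f x) (f y) → R.r x y := by
  constructor
  · intro hinj x y hxy
    exact Quotient.exact (hinj (by rw [hμ, hμ]; exact Quotient.sound hxy))
  · intro hrefl
    refine Quotient.ind₂ fun x y hxy => Quotient.sound (hrefl x y ?_)
    rw [hμ, hμ] at hxy
    exact Quotient.exact hxy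

theorem isMor_const (E R : Setoid ℕ) (x : ℕ) : IsMor E R fun _ => Quotient.mk R x :=
  ⟨fun _ => x, Computable.const x, fun _ _ _ => R.refl x, fun _ => rfl⟩

theorem IsMono.of_injective {R S : Setoid ℕ} {γ : Quotient R → Quotient S}
    (hγ : Function.Injective γ) : IsMono R S γ :=
  fun _ _ _ _ _ hcomp => hγ.comp_left hcomp

theorem IsMono.injective {R S : Setoid ℕ} {γ : Quotient R → Quotient S}
    (hγ : IsMono R S γ) : Function.Injective γ := by
  refine Quotient.ind₂ fun x y hxy => ?_
  have hconst := hγ ⊤ _ _ (isMor_const ⊤ R x) (isMor_const ⊤ R y) (funext fun _ => hxy)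
  exact congrFun hconst (Quotient.mk ⊤ 0)

/-- `R` is computably reducible to `S` iff there is a monomorphism `R → S` in `Eq`. -/
theorem stmt_3 (R S : Setoid ℕ) :
    (∃ f : ℕ → ℕ, Computable f ∧ ∀ x y, R.r x y ↔ S.r (f x) (f y)) ↔
      ∃ μ : Quotient R → Quotient S, IsMor R S μ ∧ IsMono R S μ := by
  constructor
  · rintro ⟨f, hf, hiff⟩
    let μ : Quotient R → Quotient S := Quotient.map f fun x y => (hiff x y).1
    have hμ : ∀ x, μ (Quotient.mk R x) = Quotient.mk S (f x) := fun _ => rfl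
    refine ⟨μ, ⟨f, hf, fun x y => (hiff x y).1, hμ⟩, IsMono.of_injective ?_⟩
    exact (injective_iff_reflects hμ).2 fun x y => (hiff x y).2
  · rintro ⟨μ, ⟨f, hf, hpres, hμ⟩, hmono⟩
    have hrefl := (injective_iff_reflects hμ).1 hmono.injective
    exact ⟨f, hf, fun x y => ⟨hpres x y, hrefl x y⟩⟩
end

section
/- There exist morphisms α, β : Id → Y in Eq(Π⁰₁) whose coequalizer in Eq is properly Σ⁰₂ (Σ⁰₂ but not Π⁰₁); hence Eq(Π⁰₁) is not closed under coequalizers computed in Eq. -/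
/-- The equivalence relation generated by a binary relation on ℕ. -/
def genSetoid (r : ℕ → ℕ → Prop) : Setoid ℕ :=
  ⟨Relation.EqvGen r, Relation.EqvGen.is_equivalence r⟩

/-- The relation generating the coequalizer: `Y` together with the pairs `(f₁ x, f₂ x)`. -/
def coeqRel (Y : Setoid ℕ) (f₁ f₂ : ℕ → ℕ) : ℕ → ℕ → Prop :=
  fun u v => Y.r u v ∨ ∃ x, u = f₁ x ∧ v = f₂ x

/-- A set of naturals is Π⁰₁ if its complement is c.e. -/
def Pi01Set (A : Set ℕ) : Prop := REPred fun n => n ∉ A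

/-- An equivalence relation is Π⁰₁ (a coceer) if its graph is co-c.e. -/
def CoCE (R : Setoid ℕ) : Prop := REPred fun p : ℕ × ℕ => ¬ R.r p.1 p.2

/-- The Σ⁰ₙ levels of the arithmetical hierarchy for subsets of ℕ. -/
def SigmaN : ℕ → (ℕ → Prop) → Prop
  | 0, p => ComputablePred p
  | n + 1, p => ∃ q : ℕ → Prop, SigmaN n (fun x => ¬ q x) ∧ ∀ x, p x ↔ ∃ y, q (Nat.pair x y)

/-- An equivalence relation is Σ⁰ₙ if its graph (coded via Cantor pairing) is Σ⁰ₙ. -/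
def SigmaNRel (n : ℕ) (R : Setoid ℕ) : Prop :=
  SigmaN n fun c => R.r c.unpair.1 c.unpair.2

/-- The identity (equality) equivalence relation on ℕ. -/
def idSetoid : Setoid ℕ := ⟨Eq, eq_equivalence⟩

/-!
Take `Y = Id`, `f₂ = 0` and let `f₁ ⟨n, s⟩` be `n + 1` if the `n`-th program halts on `0` within
`s` steps and `0` otherwise. Coequalizing `f₁` with a constant on `Id` collapses the constant
together with the range of `f₁` into one class and leaves all other classes trivial, so the
coequalizer is `Id` with `{0} ∪ (K + 1)` collapsed, `K` the halting set. This relation is c.e.,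
hence Σ⁰₂, but `n + 1` and `0` are inequivalent exactly when `n ∉ K`, so a co-c.e. coequalizer
would make the complement of the halting set c.e.
-/

open Nat.Partrec (Code)
open Nat.Partrec.Code

section Closure

variable {α β : Type*} [Primcodable α] [Primcodable β]

protected lemma REPred.comp {p : β → Prop} (hp : REPred p) {g : α → β} (hg : Computable g) :
    REPred fun a => p (g a) :=
  Partrec.comp hp hg

protected lemma ComputablePred.comp {p : β → Prop} (hp : ComputablePred p) {g : α → β}
    (hg : Computable g) : ComputablePred fun a => p (g a) := by
  classical
  exact (hp.decide.comp hg).computablePred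

protected lemma ComputablePred.and {p q : α → Prop} (hp : ComputablePred p)
    (hq : ComputablePred q) : ComputablePred fun a => p a ∧ q a := by
  classical
  exact Computable.computablePred (by simpa using Primrec.and.to_comp.comp hp.decide hq.decide)

protected lemma ComputablePred.or {p q : α → Prop} (hp : ComputablePred p)
    (hq : ComputablePred q) : ComputablePred fun a => p a ∨ q a := by
  classical
  exact Computable.computablePred (by simpa using Primrec.or.to_comp.comp hp.decide hq.decide)

lemma computablePred_eq {f g : α → ℕ} (hf : Computable f) (hg : Computable g) :
    ComputablePred fun a => f a = g a :=
  (Primrec.eq.decide.to_comp.comp hf hg).computablePred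

end Closure

lemma sigmaN_of_computablePred : ∀ (n : ℕ) {p : ℕ → Prop}, ComputablePred p → SigmaN n p
  | 0, _, hp => hp
  | n + 1, p, hp =>
    ⟨fun z => p z.unpair.1,
      sigmaN_of_computablePred n (hp.not.comp (Computable.fst.comp Computable.unpair)),
      fun x => ⟨fun hx => ⟨0, by simpa using hx⟩, fun ⟨_, hx⟩ => by simpa using hx⟩⟩

lemma sigmaN_succ_of_exists {n : ℕ} {p q : ℕ → Prop} (hq : ComputablePred q)
    (h : ∀ x, p x ↔ ∃ y, q (Nat.pair x y)) : SigmaN (n + 1) p :=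
  ⟨q, sigmaN_of_computablePred n hq.not, h⟩

section CoequalizerWithConstant

variable (f : ℕ → ℕ) (c : ℕ)

lemma eqvGen_coeqRel_idSetoid_const_iff (u v : ℕ) :
    Relation.EqvGen (coeqRel idSetoid f fun _ => c) u v ↔
      u = v ∨ (u ∈ insert c (Set.range f) ∧ v ∈ insert c (Set.range f)) := by
  constructor
  · intro h
    induction h with
    | rel u v huv =>
      rcases huv with rfl | ⟨x, rfl, rfl⟩
      · exact Or.inl rfl
      · exact Or.inr ⟨Or.inr ⟨x, rfl⟩, Or.inl rfl⟩
    | refl => exact Or.inl rfl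
    | symm _ _ _ ih => exact ih.imp Eq.symm And.symm
    | trans _ _ _ _ _ ih₁ ih₂ =>
      rcases ih₁ with rfl | ⟨hu, hv⟩
      · exact ih₂
      · rcases ih₂ with rfl | ⟨-, hw⟩
        exacts [Or.inr ⟨hu, hv⟩, Or.inr ⟨hu, hw⟩]
  · have to_c : ∀ w ∈ insert c (Set.range f),
        Relation.EqvGen (coeqRel idSetoid f fun _ => c) w c := by
      rintro w (rfl | ⟨x, rfl⟩)
      exacts [.refl _, .rel _ _ (Or.inr ⟨x, rfl, rfl⟩)]
    rintro (rfl | ⟨hu, hv⟩)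
    exacts [.refl _, .trans _ _ _ (to_c u hu) (.symm _ _ (to_c v hv))]

lemma mem_insert_range_iff_exists (w : ℕ) :
    w ∈ insert c (Set.range f) ↔ ∃ y, w = c ∨ f y = w := by
  simp only [Set.mem_insert_iff, Set.mem_range, exists_or, exists_const]

end CoequalizerWithConstant

lemma sigmaNRel_coeq_idSetoid_const {f : ℕ → ℕ} (hf : Computable f) (c n : ℕ) :
    SigmaNRel (n + 1) (genSetoid (coeqRel idSetoid f fun _ => c)) := by
  have u : Computable fun z : ℕ => z.unpair.1 := Computable.fst.comp Computable.unpair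
  have v : Computable fun z : ℕ => z.unpair.2 := Computable.snd.comp Computable.unpair
  -- at `⟨⟨a, b⟩, ⟨y₁, y₂⟩⟩`: `a = b`, or `y₁` and `y₂` witness `a, b ∈ {c} ∪ range f`
  refine sigmaN_succ_of_exists (q := fun z =>
      z.unpair.1.unpair.1 = z.unpair.1.unpair.2 ∨
        ((z.unpair.1.unpair.1 = c ∨ f z.unpair.2.unpair.1 = z.unpair.1.unpair.1) ∧
          (z.unpair.1.unpair.2 = c ∨ f z.unpair.2.unpair.2 = z.unpair.1.unpair.2))) ?_ ?_
  · exact (computablePred_eq (u.comp u) (v.comp u)).or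
      (((computablePred_eq (u.comp u) (.const c)).or
        (computablePred_eq (hf.comp (u.comp v)) (u.comp u))).and
      ((computablePred_eq (v.comp u) (.const c)).or
        (computablePred_eq (hf.comp (v.comp v)) (v.comp u))))
  · intro x
    simp only [Nat.unpair_pair]
    refine (eqvGen_coeqRel_idSetoid_const_iff f c _ _).trans ⟨?_, ?_⟩
    · rintro (h | ⟨ha, hb⟩)
      · exact ⟨0, Or.inl h⟩
      · obtain ⟨y₁, hy₁⟩ := (mem_insert_range_iff_exists f c _).1 ha
        obtain ⟨y₂, hy₂⟩ := (mem_insert_range_iff_exists f c _).1 hb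
        exact ⟨Nat.pair y₁ y₂, Or.inr (by simpa using And.intro hy₁ hy₂)⟩
    · rintro ⟨y, h | ⟨ha, hb⟩⟩
      · exact Or.inl h
      · exact Or.inr ⟨(mem_insert_range_iff_exists f c _).2 ⟨_, ha⟩,
          (mem_insert_range_iff_exists f c _).2 ⟨_, hb⟩⟩

def haltsWithin (s n : ℕ) : Bool :=
  (evaln s (Denumerable.ofNat Code n) 0).isSome

lemma computable₂_haltsWithin : Computable₂ haltsWithin :=
  (Primrec.option_isSome.comp (primrec_evaln.comp
    ((Primrec.fst.pair ((Primrec.ofNat Code).comp Primrec.snd)).pair (.const 0)))).to_comp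

lemma exists_haltsWithin_iff (n : ℕ) :
    (∃ s, haltsWithin s n) ↔ (eval (Denumerable.ofNat Code n) 0).Dom := by
  simp only [haltsWithin, Option.isSome_iff_exists, Part.dom_iff_mem, evaln_complete]
  exact exists_comm

def enumHalting (x : ℕ) : ℕ :=
  bif haltsWithin x.unpair.2 x.unpair.1 then x.unpair.1 + 1 else 0

lemma computable_enumHalting : Computable enumHalting :=
  Computable.cond
    (computable₂_haltsWithin.comp (Computable.snd.comp .unpair) (Computable.fst.comp .unpair))
    (Computable.succ.comp (Computable.fst.comp .unpair)) (.const 0)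

lemma succ_mem_range_enumHalting_iff (n : ℕ) :
    n + 1 ∈ Set.range enumHalting ↔ (eval (Denumerable.ofNat Code n) 0).Dom := by
  rw [← exists_haltsWithin_iff]
  constructor
  · rintro ⟨x, hx⟩
    cases h : haltsWithin x.unpair.2 x.unpair.1
    · simp [enumHalting, h] at hx
    · simp only [enumHalting, h, cond_true, add_left_inj] at hx
      exact ⟨x.unpair.2, hx ▸ h⟩
  · rintro ⟨s, hs⟩
    exact ⟨Nat.pair n s, by simp [enumHalting, hs]⟩

lemma not_coCE_coeq_enumHalting : ¬ CoCE (genSetoid (coeqRel idSetoid enumHalting fun _ => 0)) := by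
  intro h
  apply ComputablePred.halting_problem_not_re 0
  refine (h.comp (Computable.succ.comp Computable.encode |>.pair (.const 0))).of_eq fun c => ?_
  change ¬ Relation.EqvGen _ _ _ ↔ _
  rw [eqvGen_coeqRel_idSetoid_const_iff, ← Denumerable.ofNat_encode c,
    ← succ_mem_range_enumHalting_iff]
  simp

lemma coCE_idSetoid : CoCE idSetoid :=
  (computablePred_eq Computable.fst Computable.snd).not.to_re

lemma eqvPres_idSetoid (S : Setoid ℕ) (f : ℕ → ℕ) : EqvPres idSetoid S f := by
  rintro x _ rfl
  exact S.refl _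

/-- There are morphisms `α, β : Id → Y` in `Eq(Π⁰₁)`, induced by computable `f₁, f₂`,
whose coequalizer object `Z` in `Eq` (the relation generated by `Y` and the pairs
`(f₁ x, f₂ x)`) is properly Σ⁰₂: it is Σ⁰₂ but not Π⁰₁. Hence `Eq(Π⁰₁)` is not closed
under coequalizers computed in `Eq`. -/
theorem stmt_15 :
    ∃ (Y : Setoid ℕ) (f₁ f₂ : ℕ → ℕ),
      CoCE idSetoid ∧ CoCE Y ∧
      Computable f₁ ∧ Computable f₂ ∧
      EqvPres idSetoid Y f₁ ∧ EqvPres idSetoid Y f₂ ∧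
      SigmaNRel 2 (genSetoid (coeqRel Y f₁ f₂)) ∧
      ¬ CoCE (genSetoid (coeqRel Y f₁ f₂)) :=
  ⟨idSetoid, enumHalting, fun _ => 0, coCE_idSetoid, coCE_idSetoid, computable_enumHalting,
    .const 0, eqvPres_idSetoid _ _, eqvPres_idSetoid _ _,
    sigmaNRel_coeq_idSetoid_const computable_enumHalting 0 1, not_coCE_coeq_enumHalting⟩
end
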